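/- arXiv:2402.06567 — 9 statements merged into one kernel-verified Lean document; each statement's English description precedes it below -/
import Mathlib

section
/- The Diophantine equation x^3 + y^3 = a^4 - b^4 has infinitely many solutions in positive integers (x,y,a,b) with gcd(x,y,a,b) = 1 and x,y,a,b all nonzero. More precisely, the set of such quadruples is infinite. -/
theorem stmt_3 :
    {q : ℤ × ℤ × ℤ × ℤ |
      0 < q.1 ∧ 0 < q.2.1 ∧ 0 < q.2.2.1 ∧ 0 < q.2.2.2 ∧
      Int.gcd q.1 (Int.gcd q.2.1 (Int.gcd q.2.2.1 q.2.2.2)) = 1 ∧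
      q.1^3 + q.2.1^3 = q.2.2.1^4 - q.2.2.2^4}.Infinite := by
  apply Set.infinite_of_injective_forall_mem
    (f := fun n : ℕ => ((2*(2*(n:ℤ)+2), 2*(2*(n:ℤ)+2)^3,
      (2*(n:ℤ)+2)^3+1, (2*(n:ℤ)+2)^3-1) : ℤ × ℤ × ℤ × ℤ))

  · intro a b h
    simp only [Prod.mk.injEq] at h
    have := h.1
    omega
  · intro n
    have hn : (0:ℤ) ≤ (n:ℤ) := Int.natCast_nonneg n
    refine ⟨by positivity, by positivity, by positivity, by simp only; nlinarith [sq_nonneg ((n:ℤ)+1)], ?_, by simp only; ring⟩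
    have hco : IsCoprime ((2*(n:ℤ)+2)^3+1) ((2*(n:ℤ)+2)^3-1) := by
      refine ⟨1 - 4*((n:ℤ)+1)^3, 4*((n:ℤ)+1)^3, by ring⟩
    have h1 : Int.gcd ((2*(n:ℤ)+2)^3+1) ((2*(n:ℤ)+2)^3-1) = 1 :=
      Int.isCoprime_iff_gcd_eq_one.mp hco
    simp [h1]
end

section
/- The Diophantine equation x^3 - y^3 = a^4 - b^4 has infinitely many solutions in positive integers (x,y,a,b) with gcd(x,y,a,b) = 1 and such that none of x^3, y^3, a^4, b^4 equals another in a way making a partial sum vanish. -/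
/-!
With `x = 15t³+33t²+21t+4`, `y = 15t³+12t²-1`, `a = 3(2t+1)²`, `b = (3t+1)(3t+2)` one has the
polynomial identity `x³ - y³ = a⁴ - b⁴`. For `t ≥ 1` all four values are positive, `y < x` and
`b < a`, and `3a - 4b = 1` makes the quadruple primitive. Modulo `3` we have `x³ ≡ 1`, `a⁴ ≡ 0`,
`y³ ≡ 2` and `b⁴ ≡ 1`, which separates `x³` from `a⁴` and `y³` from `b⁴`. Finally `b` grows
with `t`, so distinct `t` give distinct solutions.
-/

namespace CubeFourthPowerFamily

section Algebra

variable {R : Type*} [CommRing R]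

def x (t : R) : R := 15 * t ^ 3 + 33 * t ^ 2 + 21 * t + 4

def y (t : R) : R := 15 * t ^ 3 + 12 * t ^ 2 - 1

def a (t : R) : R := 3 * (2 * t + 1) ^ 2

def b (t : R) : R := (3 * t + 1) * (3 * t + 2)

theorem x_pow_three_sub_y_pow_three (t : R) : x t ^ 3 - y t ^ 3 = a t ^ 4 - b t ^ 4 := by
  simp only [x, y, a, b]; ring

theorem isCoprime_a_b (t : R) : IsCoprime (a t) (b t) :=
  ⟨3, -4, by simp only [a, b]; ring⟩

section Map

variable {S : Type*} [CommRing S] (f : R →+* S) (t : R)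

theorem map_x : f (x t) = x (f t) := by simp [x, map_ofNat f]

theorem map_y : f (y t) = y (f t) := by simp [y, map_ofNat f]

theorem map_a : f (a t) = a (f t) := by simp [a, map_ofNat f]

theorem map_b : f (b t) = b (f t) := by simp [b, map_ofNat f]

end Map

end Algebra

theorem x_pow_three_ne_a_pow_four (t : ℤ) : x t ^ 3 ≠ a t ^ 4 := by
  have mod_three : ∀ s : ZMod 3, x s ^ 3 ≠ a s ^ 4 := by decide
  intro h
  apply mod_three (Int.castRingHom (ZMod 3) t)
  rw [← map_x, ← map_a, ← map_pow, ← map_pow, h]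

theorem y_pow_three_ne_b_pow_four (t : ℤ) : y t ^ 3 ≠ b t ^ 4 := by
  have mod_three : ∀ s : ZMod 3, y s ^ 3 ≠ b s ^ 4 := by decide
  intro h
  apply mod_three (Int.castRingHom (ZMod 3) t)
  rw [← map_y, ← map_b, ← map_pow, ← map_pow, h]

section Order

variable {R : Type*} [CommRing R] [LinearOrder R] [IsStrictOrderedRing R] {t : R}

theorem y_pos (ht : 1 ≤ t) : 0 < y t := by
  simp only [y]; nlinarith [pow_le_pow_left₀ zero_le_one ht 3, pow_le_pow_left₀ zero_le_one ht 2]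

theorem y_lt_x (ht : 0 ≤ t) : y t < x t := by
  simp only [x, y]; nlinarith [sq_nonneg t]

theorem b_pos (ht : 0 ≤ t) : 0 < b t := by
  simp only [b]; positivity

theorem b_lt_a (t : R) : b t < a t := by
  simp only [a, b]; nlinarith [sq_nonneg (2 * t + 1)]

theorem strictMonoOn_b : StrictMonoOn (b : R → R) (Set.Ici 0) := by
  intro s hs t ht hst
  simp only [Set.mem_Ici] at hs ht
  simp only [b]; nlinarith

end Order

end CubeFourthPowerFamily

open CubeFourthPowerFamily

theorem stmt_4 :
    {q : ℤ × ℤ × ℤ × ℤ |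
      0 < q.1 ∧ 0 < q.2.1 ∧ 0 < q.2.2.1 ∧ 0 < q.2.2.2 ∧
      Int.gcd q.1 (Int.gcd q.2.1 (Int.gcd q.2.2.1 q.2.2.2)) = 1 ∧
      q.1^3 + (- q.2.1^3) + (- q.2.2.1^4) + q.2.2.2^4 = 0 ∧
      q.1^3 ≠ q.2.1^3 ∧ q.2.2.1^4 ≠ q.2.2.2^4 ∧
      q.1^3 ≠ q.2.2.1^4 ∧ q.2.1^3 ≠ q.2.2.2^4}.Infinite := by
  let t : ℕ → ℤ := fun n => n + 1
  refine Set.infinite_of_injective_forall_mem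
    (f := fun n => (x (t n), y (t n), a (t n), b (t n))) (fun m n hmn => ?_) (fun n => ?_)
  · have hb : b (t m) = b (t n) := congrArg (·.2.2.2) hmn
    simpa [t] using strictMonoOn_b.injOn (by simp [t]; positivity) (by simp [t]; positivity) hb
  · have ht : 1 ≤ t n := by simp [t]
    have ht₀ : 0 ≤ t n := zero_le_one.trans ht
    have hy := y_pos ht
    have hb := b_pos ht₀
    have hab : Int.gcd (a (t n)) (b (t n)) = 1 :=
      Int.isCoprime_iff_gcd_eq_one.mp (isCoprime_a_b _)
    refine ⟨hy.trans (y_lt_x ht₀), hy, hb.trans (b_lt_a _), hb,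
      by simp [hab], by linear_combination x_pow_three_sub_y_pow_three (t n),
      ((Odd.strictMono_pow (by decide)).lt_iff_lt.mpr (y_lt_x ht₀)).ne',
      (pow_lt_pow_left₀ (b_lt_a _) hb.le (by norm_num)).ne',
      x_pow_three_ne_a_pow_four _, y_pow_three_ne_b_pow_four _⟩
end

section
/- For all integers u, v, w satisfying v^2 = u^3 + 62209·u·w^4, one has (3464u^4w^4 + (v^2-2u^3)^2)^3 + (3448u^4w^4 - (v^2-2u^3)^2)^3 = (12uw(2u^3-v^2))^4 + (24u^2vw^2)^4. -/
theorem stmt_6 (u v w : ℤ) (h : v^2 = u^3 + 62209*u*w^4) :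
    (3464*u^4*w^4 + (v^2-2*u^3)^2)^3 + (3448*u^4*w^4 - (v^2-2*u^3)^2)^3
      = (12*u*w*(2*u^3-v^2))^4 + (24*u^2*v*w^2)^4 := by
  linear_combination (-1327104*u^11*w^8) * h
end

section
/- Let g, p, q, r be positive integers with gcd(p,q)=1, gcd(p·q, r)=1, and g·q^2 = g^2·p^3 + 62209·p·r^4. Set h1 = 3464p^4r^4 + (q^2-2gp^3)^2, h2 = 3448p^4r^4 - (q^2-2gp^3)^2, h3 = 12p(2gp^3-q^2)r, h4 = 24p^2qr^2. Then gcd(h1, gcd(h2, gcd(h3, h4))) = 1. -/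
/-!
Write `h₁ = 3464 p⁴r⁴ + (q² - 2gp³)²` and `h₂ = 3448 p⁴r⁴ - (q² - 2gp³)²`. On the curve
`g q² = g² p³ + 62209 p r⁴` one has `q⁴ = h₁ + 245372 (pr)⁴`, so a prime dividing `h₁` and `pr`
would divide `q`, against the coprimality of `pr` and `q`. A prime dividing `h₁` and `h₂` divides
`h₁ + h₂ = 2⁸ 3³ (pr)⁴`, hence is `2` or `3`. It is not `3`, because the identity would give
`q⁴ ≡ 2 (pr)⁴ ≢ 0` modulo `3`, and fourth powers are `0` or `1` there. It is not `2`: for `p`, `r`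
odd the curve equation modulo `4` forces `q` to be odd, so `h₁ ≡ q⁴` is odd.
-/

section

variable {g p q r : ℤ}

theorem pow_four_eq_of_curve (hcurve : g*q^2 = g^2*p^3 + 62209*p*r^4) :
    q^4 = 3464*p^4*r^4 + (q^2-2*g*p^3)^2 + 245372*(p*r)^4 := by
  linear_combination (4*p^3) * hcurve

theorem odd_of_curve (hcurve : g*q^2 = g^2*p^3 + 62209*p*r^4) (hp : Odd p) (hr : Odd r) :
    Odd q := by
  rw [← Int.not_even_iff_odd]
  rintro ⟨c, rfl⟩
  obtain ⟨a, rfl⟩ := hp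
  obtain ⟨b, rfl⟩ := hr
  have hmod4 : (((g^2*(2*a+1)^3 + 62209*(2*a+1)*(2*b+1)^4 : ℤ)) : ZMod 4) = 0 := by
    rw [← hcurve, ZMod.intCast_zmod_eq_zero_iff_dvd]
    exact ⟨g*c^2, by ring⟩
  push_cast at hmod4
  have hres : ∀ g a b : ZMod 4, g^2*(2*a+1)^3 + 62209*(2*a+1)*(2*b+1)^4 ≠ 0 := by decide
  exact hres _ _ _ hmod4

theorem not_dvd_mul_of_prime_dvd (hcop : IsCoprime (p*r) q)
    (hcurve : g*q^2 = g^2*p^3 + 62209*p*r^4) {ℓ : ℤ} (hℓ : Prime ℓ)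
    (hdvd : ℓ ∣ 3464*p^4*r^4 + (q^2-2*g*p^3)^2) : ¬ ℓ ∣ p*r := by
  intro hpr
  have hq4 : ℓ ∣ q^4 := pow_four_eq_of_curve hcurve ▸
    dvd_add hdvd (dvd_mul_of_dvd_right (dvd_pow hpr four_ne_zero) _)
  exact hℓ.not_isUnit (hcop.isUnit_of_dvd' hpr (hℓ.dvd_of_dvd_pow hq4))

theorem two_not_dvd (hcop : IsCoprime (p*r) q) (hcurve : g*q^2 = g^2*p^3 + 62209*p*r^4) :
    ¬ 2 ∣ 3464*p^4*r^4 + (q^2-2*g*p^3)^2 := by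
  intro hdvd
  have hpr : ¬ 2 ∣ p*r := not_dvd_mul_of_prime_dvd hcop hcurve Int.prime_two hdvd
  have hp : Odd p := Int.not_even_iff_odd.mp fun h => hpr (dvd_mul_of_dvd_left h.two_dvd r)
  have hr : Odd r := Int.not_even_iff_odd.mp fun h => hpr (dvd_mul_of_dvd_right h.two_dvd p)
  have hq4 : (2:ℤ) ∣ q^4 := pow_four_eq_of_curve hcurve ▸ dvd_add hdvd ⟨122686*(p*r)^4, by ring⟩
  exact Int.not_even_iff_odd.mpr (odd_of_curve hcurve hp hr)
    (even_iff_two_dvd.mpr (Int.prime_two.dvd_of_dvd_pow hq4))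

theorem three_not_dvd (hcop : IsCoprime (p*r) q) (hcurve : g*q^2 = g^2*p^3 + 62209*p*r^4) :
    ¬ 3 ∣ 3464*p^4*r^4 + (q^2-2*g*p^3)^2 := by
  intro hdvd
  have hpr : ((p*r : ℤ) : ZMod 3) ≠ 0 := by
    rw [Ne, ZMod.intCast_zmod_eq_zero_iff_dvd]
    exact_mod_cast not_dvd_mul_of_prime_dvd hcop hcurve Int.prime_three hdvd
  have hq4 : ((q^4 : ℤ) : ZMod 3) = ((245372*(p*r)^4 : ℤ) : ZMod 3) := by
    rw [pow_four_eq_of_curve hcurve, Int.cast_add, (ZMod.intCast_zmod_eq_zero_iff_dvd _ 3).mpr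
      (by exact_mod_cast hdvd), zero_add]
  push_cast at hpr hq4
  have hres : ∀ x y : ZMod 3, x ≠ 0 → y^4 ≠ 245372 * x^4 := by decide
  exact hres _ _ hpr hq4

theorem gcd_eq_one_of_curve (hcop : IsCoprime (p*r) q)
    (hcurve : g*q^2 = g^2*p^3 + 62209*p*r^4) :
    Int.gcd (3464*p^4*r^4 + (q^2-2*g*p^3)^2) (3448*p^4*r^4 - (q^2-2*g*p^3)^2) = 1 := by
  refine Nat.eq_one_iff_not_exists_prime_dvd.mpr fun L hL hdvd => ?_
  have hLZ : Prime (L : ℤ) := Nat.prime_iff_prime_int.mp hL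
  have hdvd' := Int.natCast_dvd_natCast.mpr hdvd
  have h₁ := hdvd'.trans (Int.gcd_dvd_left _ _)
  have h₂ := hdvd'.trans (Int.gcd_dvd_right _ _)
  have hsum : (L:ℤ) ∣ 6912 * (p*r)^4 := (dvd_add h₁ h₂).trans (dvd_of_eq (by ring))
  have h6912 : L ∣ 2^8 * 3^3 := by
    have := (hLZ.dvd_or_dvd hsum).resolve_right
      fun h => not_dvd_mul_of_prime_dvd hcop hcurve hLZ h₁ (hLZ.dvd_of_dvd_pow h)
    exact_mod_cast this
  rcases hL.dvd_mul.mp h6912 with h | h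
  · obtain rfl := (Nat.prime_dvd_prime_iff_eq hL Nat.prime_two).mp (hL.dvd_of_dvd_pow h)
    exact two_not_dvd hcop hcurve h₁
  · obtain rfl := (Nat.prime_dvd_prime_iff_eq hL Nat.prime_three).mp (hL.dvd_of_dvd_pow h)
    exact three_not_dvd hcop hcurve h₁

end

theorem stmt_7_general (g p q r : ℤ)
    (h1 : Int.gcd p q = 1) (h2 : Int.gcd (p*q) r = 1)
    (h3 : g*q^2 = g^2*p^3 + 62209*p*r^4) :
    Int.gcd (3464*p^4*r^4 + (q^2-2*g*p^3)^2)
      (Int.gcd (3448*p^4*r^4 - (q^2-2*g*p^3)^2)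
        (Int.gcd (12*p*(2*g*p^3-q^2)*r) (24*p^2*q*r^2))) = 1 := by
  have hpq : IsCoprime p q := Int.isCoprime_iff_gcd_eq_one.mpr h1
  have hrq : IsCoprime r q := (Int.isCoprime_iff_gcd_eq_one.mpr h2).of_mul_left_right.symm
  rw [← Int.gcd_assoc, gcd_eq_one_of_curve (hpq.mul_left hrq) h3, Nat.cast_one, Int.gcd_one_left]

theorem stmt_7 (g p q r : ℤ) (hg : 0 < g) (hp : 0 < p) (hq : 0 < q) (hr : 0 < r)
    (h1 : Int.gcd p q = 1) (h2 : Int.gcd (p*q) r = 1)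
    (h3 : g*q^2 = g^2*p^3 + 62209*p*r^4) :
    Int.gcd (3464*p^4*r^4 + (q^2-2*g*p^3)^2)
      (Int.gcd (3448*p^4*r^4 - (q^2-2*g*p^3)^2)
        (Int.gcd (12*p*(2*g*p^3-q^2)*r) (24*p^2*q*r^2))) = 1 :=
  stmt_7_general g p q r h1 h2 h3
end

section
/- Let g, p, q, r be integers with gcd(p,q)=1, gcd(pq,r)=1 and g·q^2 = g^2·p^3 + 62209·p·r^4. Then (3464p^4r^4 + (q^2-2gp^3)^2)^3 + (3448p^4r^4 - (q^2-2gp^3)^2)^3 = (12p(2gp^3-q^2)r)^4 + (24p^2qr^2)^4. -/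
theorem stmt_8 (g p q r : ℤ)
    (h1 : Int.gcd p q = 1) (h2 : Int.gcd (p*q) r = 1)
    (h3 : g*q^2 = g^2*p^3 + 62209*p*r^4) :
    (3464*p^4*r^4 + (q^2-2*g*p^3)^2)^3 + (3448*p^4*r^4 - (q^2-2*g*p^3)^2)^3
      = (12*p*(2*g*p^3-q^2)*r)^4 + (24*p^2*q*r^2)^4 := by
  linear_combination (-1327104 * p^11 * r^8) * h3
end

section
/- The Diophantine equation x^3 - y^3 = a^6 - b^6 has infinitely many solutions in positive integers (x,y,a,b) with gcd(x,y,a,b)=1 and x,y,a,b ≥ 1. Explicitly, for each positive integer t, taking u=3t+1, v=6t+1, the quadruple x = 3u(v^3-3u^3), y = v(9u^3-v^3), a = v^2, b = 3u^2 is such a solution, and these solutions are pairwise distinct. -/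
/-!
Homogenizing Mahler's identity gives
`(3u²)⁶ + (3u(v³ - 3u³))³ = (v(9u³ - v³))³ + v¹²`, so the quadruple
`(3u(v³ - 3u³), v(9u³ - v³), v², 3u²)` solves `x³ - y³ = a⁶ - b⁶` for all `u, v`.
Its entries are positive as soon as `3u³ < v³ < 9u³`, and it is primitive as soon as `v`
is coprime to `3u`. Both hold along `u = 3t + 1`, `v = 6t + 1` for `t > 0`, and `a = v²`
already separates the members of this family.
-/

def primitiveSolutions : Set (ℤ × ℤ × ℤ × ℤ) :=
  {q | 0 < q.1 ∧ 0 < q.2.1 ∧ 0 < q.2.2.1 ∧ 0 < q.2.2.2 ∧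
    Int.gcd q.1 (Int.gcd q.2.1 (Int.gcd q.2.2.1 q.2.2.2)) = 1 ∧
    q.1^3 - q.2.1^3 = q.2.2.1^6 - q.2.2.2^6}

def mahlerQuadruple (u v : ℤ) : ℤ × ℤ × ℤ × ℤ :=
  (3*u*(v^3-3*u^3), v*(9*u^3-v^3), v^2, 3*u^2)

theorem mahler_identity {R : Type*} [CommRing R] (u v : R) :
    (3*u*(v^3-3*u^3))^3 - (v*(9*u^3-v^3))^3 = (v^2)^6 - (3*u^2)^6 := by
  ring

theorem Int.gcd_gcd_gcd_eq_one {a b c d : ℤ} (h : Int.gcd c d = 1) :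
    Int.gcd a (Int.gcd b (Int.gcd c d)) = 1 := by
  simp only [h, Int.gcd_one_right, Nat.cast_one]

theorem mahlerQuadruple_mem_primitiveSolutions {u v : ℤ} (hu : 0 < u)
    (hlow : 3*u^3 < v^3) (hhigh : v^3 < 9*u^3) (hcop : IsCoprime v (3*u)) :
    mahlerQuadruple u v ∈ primitiveSolutions := by
  have hv : 0 < v :=
    (Odd.pow_pos_iff (n := 3) (by decide)).mp ((mul_pos three_pos (pow_pos hu 3)).trans hlow)
  have hgcd : Int.gcd (v^2) (3*u^2) = 1 :=
    Int.isCoprime_iff_gcd_eq_one.mp (hcop.of_mul_right_left.mul_right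
      (hcop.of_mul_right_right.pow_right)).pow_left
  exact ⟨mul_pos (by omega) (by linarith), mul_pos hv (by linarith), pow_pos hv 2,
    mul_pos three_pos (pow_pos hu 2), Int.gcd_gcd_gcd_eq_one hgcd, mahler_identity u v⟩

theorem eq_of_mahlerQuadruple_eq {u v u' v' : ℤ} (hv : 0 < v) (hv' : 0 < v')
    (h : mahlerQuadruple u v = mahlerQuadruple u' v') : v = v' :=
  (pow_left_inj₀ hv.le hv'.le two_ne_zero).mp (congrArg (fun q => q.2.2.1) h)

abbrev mahlerFamily (t : ℤ) : ℤ × ℤ × ℤ × ℤ := mahlerQuadruple (3*t+1) (6*t+1)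

theorem mahlerFamily_mem_primitiveSolutions {t : ℤ} (ht : 0 < t) :
    mahlerFamily t ∈ primitiveSolutions := by
  have hcop3 : IsCoprime (6*t+1) 3 := ⟨1, -2*t, by ring⟩
  have hcopu : IsCoprime (6*t+1) (3*t+1) := ⟨-1, 2, by ring⟩
  refine mahlerQuadruple_mem_primitiveSolutions (by positivity) ?_ ?_ (hcop3.mul_right hcopu)
  · nlinarith [pow_pos ht 2, pow_pos ht 3]
  · nlinarith [pow_pos ht 2, pow_pos ht 3]

theorem mahlerFamily_injOn : Set.InjOn mahlerFamily (Set.Ioi 0) := fun t ht s hs h => by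
  have hv := eq_of_mahlerQuadruple_eq (u := 3*t+1) (u' := 3*s+1)
    (by linarith [Set.mem_Ioi.mp ht]) (by linarith [Set.mem_Ioi.mp hs]) h
  omega

theorem stmt_14 :
    ({q : ℤ × ℤ × ℤ × ℤ |
        0 < q.1 ∧ 0 < q.2.1 ∧ 0 < q.2.2.1 ∧ 0 < q.2.2.2 ∧
        Int.gcd q.1 (Int.gcd q.2.1 (Int.gcd q.2.2.1 q.2.2.2)) = 1 ∧
        q.1^3 - q.2.1^3 = q.2.2.1^6 - q.2.2.2^6}.Infinite) ∧
    (∀ t : ℤ, 0 < t →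
      (3*(3*t+1)*((6*t+1)^3-3*(3*t+1)^3),
        (6*t+1)*(9*(3*t+1)^3-(6*t+1)^3),
        (6*t+1)^2, 3*(3*t+1)^2) ∈
        {q : ℤ × ℤ × ℤ × ℤ |
          0 < q.1 ∧ 0 < q.2.1 ∧ 0 < q.2.2.1 ∧ 0 < q.2.2.2 ∧
          Int.gcd q.1 (Int.gcd q.2.1 (Int.gcd q.2.2.1 q.2.2.2)) = 1 ∧
          q.1^3 - q.2.1^3 = q.2.2.1^6 - q.2.2.2^6}) ∧
    (∀ t s : ℤ, 0 < t → 0 < s →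
      (3*(3*t+1)*((6*t+1)^3-3*(3*t+1)^3),
        (6*t+1)*(9*(3*t+1)^3-(6*t+1)^3),
        (6*t+1)^2, 3*(3*t+1)^2) =
      (3*(3*s+1)*((6*s+1)^3-3*(3*s+1)^3),
        (6*s+1)*(9*(3*s+1)^3-(6*s+1)^3),
        (6*s+1)^2, 3*(3*s+1)^2) → t = s) :=
  ⟨Set.infinite_of_injOn_mapsTo mahlerFamily_injOn
      (fun _ ht => mahlerFamily_mem_primitiveSolutions ht) (Set.Ioi_infinite 0),
    fun _ ht => mahlerFamily_mem_primitiveSolutions ht,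
    fun _ _ ht hs h => mahlerFamily_injOn ht hs h⟩
end

section
/- For each positive integer t, setting u=t and v=3t+1, the integers x = 3u(v^3-3u^3), y = |v(9u^3-v^3)| = v(v^3-9u^3), a = v^2, b = 3u^2 are positive and satisfy x^3 + y^3 = a^6 - b^6. -/
theorem stmt_15 (t : ℤ) (ht : 0 < t) :
    0 < 3*t*((3*t+1)^3-3*t^3) ∧ 0 < (3*t+1)*((3*t+1)^3-9*t^3) ∧
    0 < ((3*t+1)^2 : ℤ) ∧ 0 < (3*t^2 : ℤ) ∧
    (3*t*((3*t+1)^3-3*t^3))^3 + ((3*t+1)*((3*t+1)^3-9*t^3))^3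
      = ((3*t+1)^2)^6 - (3*t^2)^6 := by
  refine ⟨?_, ?_, ?_, ?_, by ring⟩ <;> nlinarith [sq_nonneg t, sq_nonneg (t+1), pow_pos ht 3, pow_pos ht 2]
end

section
/- For every natural number m and every integer x, (3^{3m+2}·x^{3(2m+1)} - 1)^3 + (3^{m+1}·x^{2m+1}·(3^{3m+1}·x^{3(2m+1)} - 1))^3 = (3x^2)^{6(2m+1)} - 1. -/
theorem stmt_16 (m : ℕ) (x : ℤ) :
    (3^(3*m+2)*x^(3*(2*m+1)) - 1)^3
      + (3^(m+1)*x^(2*m+1)*(3^(3*m+1)*x^(3*(2*m+1)) - 1))^3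
      = (3*x^2)^(6*(2*m+1)) - 1 := by
  have key : ∀ a b : ℤ, (9*a^3*b^3 - 1)^3 + (3*a*b*(3*a^3*b^3 - 1))^3
      = (a^4*b^4)^3 * 729 - 1 := by intro a b; ring
  have h1 : (3:ℤ)^(3*m+2) = 9*((3:ℤ)^m)^3 := by rw [← pow_mul]; ring
  have h2 : x^(3*(2*m+1)) = (x^(2*m+1))^3 := by rw [← pow_mul]; ring_nf
  have h3 : (3:ℤ)^(m+1) = 3*(3:ℤ)^m := by ring
  have h4 : (3:ℤ)^(3*m+1) = 3*((3:ℤ)^m)^3 := by rw [← pow_mul]; ring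
  have h5 : (3*x^2)^(6*(2*m+1)) = (((3:ℤ)^m)^4*(x^(2*m+1))^4)^3 * 729 := by
    rw [mul_pow, ← pow_mul, ← pow_mul, mul_pow, ← pow_mul, ← pow_mul, ← pow_mul]
    ring_nf
  rw [h1, h2, h3, h4, h5, key]
end

section
/- For every natural number m and every integer x, (3^{m+1}·x^{2m+1}·(3^{3m+1}·x^{3(2m+1)} + 1))^3 - (3^{3m+2}·x^{3(2m+1)} + 1)^3 = (3x^2)^{6(2m+1)} - 1. -/
theorem stmt_17 (m : ℕ) (x : ℤ) :
    (3^(m+1)*x^(2*m+1)*(3^(3*m+1)*x^(3*(2*m+1)) + 1))^3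
      - (3^(3*m+2)*x^(3*(2*m+1)) + 1)^3
      = (3*x^2)^(6*(2*m+1)) - 1 := by
  have h1 : (3:ℤ)^(m+1) = 3 * 3^m := by rw [pow_succ]; ring
  have h2 : (3:ℤ)^(3*m+1) = 3 * (3^m)^3 := by
    rw [show 3*m+1 = m*3+1 by ring, pow_succ, pow_mul]; ring
  have h3 : (3:ℤ)^(3*m+2) = 9 * (3^m)^3 := by
    rw [show 3*m+2 = m*3+2 by ring, pow_add, pow_mul]; ring
  have h4 : x^(3*(2*m+1)) = (x^(2*m+1))^3 := by
    rw [show 3*(2*m+1) = (2*m+1)*3 by ring, pow_mul]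
  have h5 : ((3:ℤ)*x^2)^(6*(2*m+1)) = ((3:ℤ) * (3^m)^2 * (x^(2*m+1))^2)^6 := by
    have h6 : (3:ℤ)^(m*2+1) = 3*(3^m)^2 := by rw [pow_succ, pow_mul]; ring
    rw [show 6*(2*m+1) = (2*m+1)*6 by ring, pow_mul, mul_pow,
      pow_right_comm x, show 2*m+1 = m*2+1 by ring, h6]
  rw [h1, h2, h3, h4, h5]
  ring
end
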